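/- With the Kleene-implication sequences t_n, f_n, u_n as above, f_n satisfies the recurrence f_n = Σ_{i=1}^{n-1} f_i · (2·3^{n-i-1}·C_{n-i} − f_{n-i}) for n ≥ 2, with f_1 = 1, where C_m = (1/m)·binomial(2m-2, m-1). -/

import Mathlib

/-!
Substituting `t = 3^n C_n - f - u` into the recurrence for `u`, the mixed terms `u_i f_{n-i}` and
`f_i u_{n-i}` cancel under `i ↔ n - i`, leaving `u_n = Σ 3^i C_i u_{n-i}`; the Catalan convolution
then gives `u_n = 3^(n-1) C_n`, hence `t_m = 2·3^(m-1) C_m - f_m`. The recurrence for `f`, read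
under `i ↔ n - i`, is the claim.
-/

/-- `C n = (1/n) * binom(2n-2, n-1)`, the number of bracketings of `n` terms. -/
noncomputable def catC (n : ℕ) : ℚ := (Nat.choose (2 * n - 2) (n - 1) : ℚ) / n

open Finset

theorem Finset.sum_Icc_one_sub_reflect {M : Type*} [AddCommMonoid M] (n : ℕ) (g : ℕ → M) :
    ∑ i ∈ Icc 1 (n - 1), g (n - i) = ∑ i ∈ Icc 1 (n - 1), g i := by
  refine sum_nbij' (n - ·) (n - ·) ?_ ?_ ?_ ?_ (fun _ _ => rfl) <;> intro i <;> grind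

theorem Finset.sum_Icc_one_mul_sub_comm {R : Type*} [CommSemiring R] (n : ℕ) (a b : ℕ → R) :
    ∑ i ∈ Icc 1 (n - 1), a i * b (n - i) = ∑ i ∈ Icc 1 (n - 1), b i * a (n - i) := by
  rw [← sum_Icc_one_sub_reflect n (fun i => b i * a (n - i))]
  refine sum_congr rfl fun i hi => ?_
  rw [mul_comm, Nat.sub_sub_self (by grind)]

theorem catC_succ (n : ℕ) : catC (n + 1) = catalan n := by
  rw [catC, catalan_eq_centralBinom_div, Nat.cast_div (Nat.succ_dvd_centralBinom n) (by positivity)]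
  simp [Nat.centralBinom, mul_add]

theorem catC_one : catC 1 = 1 := by
  simpa using catC_succ 0

theorem catC_eq_sum_mul {n : ℕ} (hn : 2 ≤ n) :
    catC n = ∑ i ∈ Icc 1 (n - 1), catC i * catC (n - i) := by
  obtain ⟨m, rfl⟩ := Nat.exists_eq_add_of_le' hn
  have hIcc : Icc 1 (m + 2 - 1) = Ico (0 + 1) (m + 1 + 1) := by ext; simp
  rw [catC_succ, catalan_succ, hIcc, ← sum_Ico_add', ← range_eq_Ico, ← Fin.sum_univ_eq_sum_range]
  push_cast
  refine sum_congr rfl fun i _ => ?_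
  rw [catC_succ, Nat.sub_add_comm (Nat.le_of_lt_succ i.isLt), catC_succ]

section KleeneCounts

variable {t f u : ℕ → ℚ}

theorem t_eq_of_one_le (ht1 : t 1 = 1) (hf1 : f 1 = 1) (hu1 : u 1 = 1)
    (ht : ∀ n : ℕ, 2 ≤ n → t n = (3 : ℚ) ^ n * catC n - f n - u n) {n : ℕ} (hn : 1 ≤ n) :
    t n = 3 ^ n * catC n - f n - u n := by
  obtain rfl | hn := hn.eq_or_lt
  · rw [ht1, hf1, hu1, catC_one]; norm_num
  · exact ht n hn

theorem u_eq_sum_mul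
    (hu : ∀ n : ℕ, 2 ≤ n → u n = ∑ i ∈ Icc 1 (n - 1),
      (t i * u (n - i) + u i * f (n - i) + u i * u (n - i)))
    (ht : ∀ n : ℕ, 1 ≤ n → t n = 3 ^ n * catC n - f n - u n) {n : ℕ} (hn : 2 ≤ n) :
    u n = ∑ i ∈ Icc 1 (n - 1), 3 ^ i * catC i * u (n - i) := by
  have hterm : ∀ i ∈ Icc 1 (n - 1),
      t i * u (n - i) + u i * f (n - i) + u i * u (n - i)
        = 3 ^ i * catC i * u (n - i) + (u i * f (n - i) - f i * u (n - i)) := by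
    intro i hi
    rw [ht i (mem_Icc.1 hi).1]
    ring
  rw [hu n hn, sum_congr rfl hterm, sum_add_distrib, sum_sub_distrib,
    sum_Icc_one_mul_sub_comm n u f, sub_self, add_zero]

theorem u_eq_pow_mul_catC (hu1 : u 1 = 1)
    (hu : ∀ n : ℕ, 2 ≤ n → u n = ∑ i ∈ Icc 1 (n - 1),
      (t i * u (n - i) + u i * f (n - i) + u i * u (n - i)))
    (ht : ∀ n : ℕ, 1 ≤ n → t n = 3 ^ n * catC n - f n - u n) {n : ℕ} (hn : 1 ≤ n) :
    u n = 3 ^ (n - 1) * catC n := by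
  induction n using Nat.strong_induction_on with
  | _ n ih =>
    obtain rfl | hn := hn.eq_or_lt
    · rw [hu1, catC_one]; norm_num
    have hterm : ∀ i ∈ Icc 1 (n - 1),
        3 ^ i * catC i * u (n - i) = 3 ^ (n - 1) * (catC i * catC (n - i)) := by
      intro i hi
      obtain ⟨hi1, hin⟩ := mem_Icc.1 hi
      rw [ih (n - i) (by omega) (by omega), mul_mul_mul_comm, ← pow_add,
        show i + (n - i - 1) = n - 1 by omega]
    rw [u_eq_sum_mul hu ht hn, sum_congr rfl hterm, ← mul_sum, ← catC_eq_sum_mul hn]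

theorem t_eq_two_mul_pow_mul_catC_sub (hu1 : u 1 = 1)
    (hu : ∀ n : ℕ, 2 ≤ n → u n = ∑ i ∈ Icc 1 (n - 1),
      (t i * u (n - i) + u i * f (n - i) + u i * u (n - i)))
    (ht : ∀ n : ℕ, 1 ≤ n → t n = 3 ^ n * catC n - f n - u n) {n : ℕ} (hn : 1 ≤ n) :
    t n = 2 * 3 ^ (n - 1) * catC n - f n := by
  rw [ht n hn, u_eq_pow_mul_catC hu1 hu ht hn]
  obtain ⟨k, rfl⟩ := Nat.exists_eq_add_of_le' hn
  rw [Nat.add_sub_cancel, pow_succ]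
  ring

end KleeneCounts

/-- the "false" row counts satisfy
`f n = Σ_{i=1}^{n-1} f i * (2 * 3^(n-i-1) * C (n-i) - f (n-i))` for `n ≥ 2`. -/
theorem f_recurrence (t f u : ℕ → ℚ)
    (ht1 : t 1 = 1) (hf1 : f 1 = 1) (hu1 : u 1 = 1)
    (hf : ∀ n : ℕ, 2 ≤ n → f n = ∑ i ∈ Finset.Icc 1 (n - 1), t i * f (n - i))
    (hu : ∀ n : ℕ, 2 ≤ n → u n = ∑ i ∈ Finset.Icc 1 (n - 1),
      (t i * u (n - i) + u i * f (n - i) + u i * u (n - i)))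
    (ht : ∀ n : ℕ, 2 ≤ n → t n = (3 : ℚ) ^ n * catC n - f n - u n) :
    ∀ n : ℕ, 2 ≤ n →
      f n = ∑ i ∈ Finset.Icc 1 (n - 1),
        f i * (2 * (3 : ℚ) ^ (n - i - 1) * catC (n - i) - f (n - i)) := by
  have ht' : ∀ n, 1 ≤ n → t n = 3 ^ n * catC n - f n - u n :=
    fun n => t_eq_of_one_le ht1 hf1 hu1 ht
  intro n hn
  rw [hf n hn, sum_Icc_one_mul_sub_comm]
  refine sum_congr rfl fun i hi => ?_
  rw [t_eq_two_mul_pow_mul_catC_sub hu1 hu ht' (by grind)]
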